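/- With the α-twisted operations on T(G,A,α), the associativity relation m(m(a,b,c),d,e) = m(a, m(b,d,f), m(c,Q(f),e)) holds for all admissible elements if and only if α(g^{-1}h,h^{-1}k,k^{-1}) + α(g^{-1}k,k^{-1}l,l^{-1}) = (g^{-1}h)·α(h^{-1}k,k^{-1}l,l^{-1}) + α(g^{-1}k,k^{-1}l,l^{-1}h) + α(g^{-1}h,h^{-1}l,l^{-1}) for all g,h,k,l ∈ G. -/
import Mathlib


variable {G A : Type} [Group G] [AddCommGroup A] [DistribMulAction G A]

/-- `m((a,(g,h⁻¹)),(b,(h,k⁻¹)),(c,(h⁻¹g,k⁻¹h))) =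
  (a + (g⁻¹h)b + c + α(g⁻¹h,h⁻¹k,k⁻¹), (g,k⁻¹))` in `T(G,A,α)`. -/
def mTw (α : G → G → G → A) (g h k : G) (a b c : A) : A :=
  a + (g⁻¹ * h) • b + c + α (g⁻¹ * h) (h⁻¹ * k) k⁻¹

/-- `Q((a,(g,h⁻¹))) = (-(g•a), (g⁻¹,h⁻¹g))`. -/
def qTw (g : G) (a : A) : A := -(g • a)

/-- The associativity relation `m(m(a,b,c),d,e) = m(a, m(b,d,f), m(c,Q(f),e))` holds in
`T(G,A,α)` (for `a ∈ T(g,h⁻¹)`, `b ∈ T(h,k⁻¹)`, `c ∈ T(h⁻¹g,k⁻¹h)`, `d ∈ T(k,l⁻¹)`,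
`e ∈ T(k⁻¹g,l⁻¹k)`, `f ∈ T(k⁻¹h,l⁻¹k)`) if and only if
`α(g⁻¹h,h⁻¹k,k⁻¹) + α(g⁻¹k,k⁻¹l,l⁻¹) =
  (g⁻¹h)•α(h⁻¹k,k⁻¹l,l⁻¹) + α(g⁻¹k,k⁻¹l,l⁻¹h) + α(g⁻¹h,h⁻¹l,l⁻¹)` for all `g,h,k,l`. -/
theorem assoc_compat_iff (α : G → G → G → A) :
    (∀ (g h k l : G) (a b c d e f : A),
        mTw α g k l (mTw α g h k a b c) d e =
          mTw α g h l a (mTw α h k l b d f)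
            (mTw α (h⁻¹ * g) (h⁻¹ * k) (h⁻¹ * l) c (qTw (k⁻¹ * h) f) e)) ↔
      (∀ g h k l : G,
        α (g⁻¹ * h) (h⁻¹ * k) k⁻¹ + α (g⁻¹ * k) (k⁻¹ * l) l⁻¹ =
          (g⁻¹ * h) • α (h⁻¹ * k) (k⁻¹ * l) l⁻¹ + α (g⁻¹ * k) (k⁻¹ * l) (l⁻¹ * h) +
            α (g⁻¹ * h) (h⁻¹ * l) l⁻¹) := by
  constructor
  · intro H g h k l
    have := H g h k l 0 0 0 0 0 0
    simp only [mTw, qTw, smul_zero, neg_zero, zero_add, add_zero] at this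
    rwa [show (h⁻¹*g)⁻¹*(h⁻¹*k) = g⁻¹*k by group,
        show (h⁻¹*k)⁻¹*(h⁻¹*l) = k⁻¹*l by group,
        show (h⁻¹*l)⁻¹ = l⁻¹*h by group] at this
  · intro H g h k l a b c d e f
    have := H g h k l
    simp only [mTw, qTw]
    rw [show (h⁻¹*g)⁻¹*(h⁻¹*k) = g⁻¹*k by group,
        show (h⁻¹*k)⁻¹*(h⁻¹*l) = k⁻¹*l by group,
        show (h⁻¹*l)⁻¹ = l⁻¹*h by group]
    simp only [smul_add, smul_neg, mul_smul, smul_inv_smul, inv_smul_smul]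
    simp only [mul_smul] at this
    rw [show (a + g⁻¹ • h • b + c + α (g⁻¹ * h) (h⁻¹ * k) k⁻¹ + g⁻¹ • k • d + e +
          α (g⁻¹ * k) (k⁻¹ * l) l⁻¹ : A) =
        a + g⁻¹ • h • b + c + g⁻¹ • k • d + e +
          (α (g⁻¹ * h) (h⁻¹ * k) k⁻¹ + α (g⁻¹ * k) (k⁻¹ * l) l⁻¹) from by abel, this]
    abel
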